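/- Let 𝓡 be right amenable, let ℱ = (F_i)_{i∈I} be a right Følner net in 𝓡, let X be a strongly irreducible subshift of Q^M of finite type, let Y be a subshift of Q^M, and let Δ be a local map from X to Y such that Ent_ℱ(Δ(X)) < Ent_ℱ(X). Then Δ is not pre-injective. -/

import Mathlib

/-!
Fix `y ∈ X`. Strong irreducibility and finite type let every pattern of `X` on a finite `F`
be extended to a point of `X` that equals `y` outside `F^{+ρ}`. Two such extensions differ
only on a finite set, so by pre-injectivity and `κ`-locality they are distinguished by their
images on `F^{+(κ+ρ)}`. Hence
`|X_F| ≤ |Δ(X)_{F^{+(κ+ρ)}}| ≤ |Δ(X)_F| · |Q|^{|∂_{κ+ρ} F|}`;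
taking logarithms, dividing by `|F|` and passing to the `limsup` along the Følner net, the
boundary term vanishes and `Ent(X) ≤ Ent(Δ(X))`.
-/

open Filter Set

namespace GoE

variable {G M Q : Type*}

/-- A left homogeneous space `⟨M, G, ▷⟩` together with a coordinate system
`⟨m₀, (g_{m₀,m})_{m∈M}⟩`: a cell space with finite stabiliser `G₀` of `m₀`. -/
structure CellSpace (G M : Type*) [Group G] where
  act : G → M → M
  one_act : ∀ m : M, act 1 m = m
  mul_act : ∀ (g h : G) (m : M), act (g * h) m = act g (act h m)
  transitive : ∀ m m' : M, ∃ g : G, act g m = m'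
  m0 : M
  coord : M → G
  coord_act : ∀ m : M, act (coord m) m0 = m
  stab_finite : {g : G | act g m0 = m0}.Finite

variable [Group G]

namespace CellSpace

/-- Membership in the stabiliser `G₀` of `m₀`. -/
def stab (R : CellSpace G M) (g : G) : Prop := R.act g R.m0 = R.m0

/-- The induced right semi-action `m ↝ gG₀ = g_{m₀,m} g ▷ m₀`, on representatives. -/
def sAct (R : CellSpace G M) (m : M) (g : G) : M := R.act (R.coord m * g) R.m0

/-- `m ↝ ι n` where `ι : M → G/G₀`, `n ↦ G_{m₀,n}` is the canonical identification. -/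
def nAct (R : CellSpace G M) (m n : M) : M := R.act (R.coord m * R.coord n) R.m0

/-- `S ⊆ G` represents a finite symmetric right generating set of cosets
(`G₀ · S ⊆ S`, `S⁻¹ ⊆ S`, and `S` generates). -/
structure IsRightGenSet (R : CellSpace G M) (S : Set G) : Prop where
  finite : S.Finite
  saturated : ∀ s ∈ S, ∀ g₀ : G, R.stab g₀ → s * g₀ ∈ S
  stab_mul : ∀ g₀ : G, R.stab g₀ → ∀ s ∈ S, g₀ * s ∈ S
  symm : ∀ s ∈ S, s⁻¹ ∈ S
  generates : ∀ m : M, ∃ (k : ℕ) (f : ℕ → M), f 0 = R.m0 ∧ f k = m ∧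
    ∀ i < k, ∃ s ∈ S, f (i + 1) = R.sAct (f i) s

/-- There is an `S`-path of length `n` from `m` to `m'` in the `S`-Cayley graph. -/
def Chain (R : CellSpace G M) (S : Set G) (m m' : M) (n : ℕ) : Prop :=
  ∃ f : ℕ → M, f 0 = m ∧ f n = m' ∧ ∀ i < n, ∃ s ∈ S, f (i + 1) = R.sAct (f i) s

/-- The `S`-metric `d`. -/
noncomputable def dist (R : CellSpace G M) (S : Set G) (m m' : M) : ℕ :=
  sInf {n : ℕ | R.Chain S m m' n}

/-- The ball `B(m, ρ)` of radius `ρ` centred at `m`. -/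
noncomputable def ball (R : CellSpace G M) (S : Set G) (m : M) (ρ : ℕ) : Set M :=
  {m' : M | R.dist S m m' ≤ ρ}

/-- The `θ`-interior `A^{-θ}` of `A`. -/
noncomputable def inter (R : CellSpace G M) (S : Set G) (A : Set M) (θ : ℕ) : Set M :=
  {m ∈ A | R.ball S m θ ⊆ A}

/-- The `θ`-closure `A^{+θ}` of `A`. -/
noncomputable def clos (R : CellSpace G M) (S : Set G) (A : Set M) (θ : ℕ) : Set M :=
  {m : M | (R.ball S m θ ∩ A).Nonempty}

/-- The external `θ`-boundary `∂θ⁺A = A^{+θ} ∖ A`. -/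
noncomputable def extB (R : CellSpace G M) (S : Set G) (A : Set M) (θ : ℕ) : Set M :=
  R.clos S A θ \ A

/-- The internal `θ`-boundary `∂θ⁻A = A ∖ A^{-θ}`. -/
noncomputable def intB (R : CellSpace G M) (S : Set G) (A : Set M) (θ : ℕ) : Set M :=
  A \ R.inter S A θ

/-- The `θ`-boundary `∂θA = A^{+θ} ∖ A^{-θ}`. -/
noncomputable def bdry (R : CellSpace G M) (S : Set G) (A : Set M) (θ : ℕ) : Set M :=
  R.clos S A θ \ R.inter S A θ

end CellSpace

/-- The set `X_A` of restrictions to `A` of the elements of `X`. -/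
def restr (A : Set M) (X : Set (M → Q)) : Set (A → Q) :=
  (fun x : M → Q => A.restrict x) '' X

/-- The pattern `p` (with domain `A`) semi-occurs in the configuration `c`:
there is `h ∈ H` with `h ⊛ p = c↾_{h ▷ dom p}`. -/
def SemiOccurs (R : CellSpace G M) (H : Subgroup G) {A : Set M} (p : A → Q)
    (c : M → Q) : Prop :=
  ∃ h ∈ H, ∀ a : A, c (R.act h ↑a) = p a

/-- The pattern `p` (with domain `A`) occurs at `t` in the configuration `c`:
`t ⊛' p = c↾_{t ↝ A}`. -/
def OccursAt (R : CellSpace G M) {A : Set M} (p : A → Q) (t : M) (c : M → Q) : Prop :=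
  ∀ a : A, c (R.nAct t ↑a) = p a

/-- The pattern `p` is allowed in `X`: it semi-occurs in some point of `X`. -/
def Allowed (R : CellSpace G M) (H : Subgroup G) (X : Set (M → Q)) {A : Set M}
    (p : A → Q) : Prop :=
  ∃ x ∈ X, SemiOccurs R H p x

/-- The set `⟨𝔉⟩` generated by a set `𝔉` of forbidden patterns. -/
def Generated (R : CellSpace G M) (H : Subgroup G) (𝔉 : Set (Σ A : Set M, A → Q)) :
    Set (M → Q) :=
  {c : M → Q | ∀ f ∈ 𝔉, ¬ SemiOccurs R H f.2 c}

/-- `X` is a subshift of `Q^M`: it is generated by a set of blocks. -/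
def IsSubshift (R : CellSpace G M) (H : Subgroup G) (X : Set (M → Q)) : Prop :=
  ∃ 𝔉 : Set (Σ A : Set M, A → Q), (∀ f ∈ 𝔉, f.1.Finite) ∧ X = Generated R H 𝔉

/-- `X` is a subshift of finite type: it is generated by a finite set of blocks. -/
def IsSubshiftFT (R : CellSpace G M) (H : Subgroup G) (X : Set (M → Q)) : Prop :=
  ∃ 𝔉 : Set (Σ A : Set M, A → Q), 𝔉.Finite ∧ (∀ f ∈ 𝔉, f.1.Finite) ∧
    X = Generated R H 𝔉

/-- `X` is a `κ`-step subshift: it is generated by a set of `B(κ)`-blocks. -/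
def IsStep (R : CellSpace G M) (S : Set G) (H : Subgroup G) (X : Set (M → Q))
    (κ : ℕ) : Prop :=
  ∃ 𝔉 : Set (Σ A : Set M, A → Q), (∀ f ∈ 𝔉, f.1 = R.ball S R.m0 κ) ∧
    X = Generated R H 𝔉

/-- `X` is `κ`-strongly irreducible. -/
def IsStronglyIrr (R : CellSpace G M) (S : Set G) (H : Subgroup G)
    (X : Set (M → Q)) (κ : ℕ) : Prop :=
  ∀ (A B : Set M), A.Finite → B.Finite → ∀ (p : A → Q) (p' : B → Q),
    Allowed R H X p → Allowed R H X p' →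
    (∀ a ∈ A, ∀ b ∈ B, κ + 1 ≤ R.dist S a b) →
    ∃ x ∈ X, A.restrict x = p ∧ B.restrict x = p'

/-- `X` has `ρ`-bounded propagation. -/
def HasBoundedProp (R : CellSpace G M) (S : Set G) (X : Set (M → Q)) (ρ : ℕ) : Prop :=
  ∀ F : Set M, F.Finite → ∀ p : F → Q,
    (∀ f ∈ F, ∃ x ∈ X, ∀ (m : M) (hm : m ∈ R.ball S f ρ ∩ F), p ⟨m, hm.2⟩ = x m) →
    ∃ x ∈ X, F.restrict x = p

/-- `Δ` is a `κ`-local map from `X` to `Y`. -/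
def IsLocalMap (R : CellSpace G M) (S : Set G) (H : Subgroup G)
    (X Y : Set (M → Q)) (Δ : (M → Q) → (M → Q)) (κ : ℕ) : Prop :=
  Set.MapsTo Δ X Y ∧
  ∃ N : Set M, N ⊆ R.ball S R.m0 κ ∧
    (∀ g₀ : G, R.stab g₀ → ∀ n ∈ N, R.act g₀ n ∈ N) ∧
    ∃ δ : (N → Q) → Q,
      (∀ h₀ ∈ H, R.stab h₀ →
        ∀ ℓ ∈ restr N X, ∀ ℓ' : N → Q,
          (∀ (n : M) (hn : n ∈ N) (hn' : R.act h₀⁻¹ n ∈ N),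
            ℓ' ⟨n, hn⟩ = ℓ ⟨R.act h₀⁻¹ n, hn'⟩) →
          δ ℓ' = δ ℓ) ∧
      ∀ x ∈ X, ∀ m : M, Δ x m = δ (fun n : N => x (R.nAct m ↑n))

/-- `Δ` is pre-injective on `X`. -/
def PreInjective (X : Set (M → Q)) (Δ : (M → Q) → (M → Q)) : Prop :=
  ∀ x ∈ X, ∀ x' ∈ X, Δ x = Δ x' → {m : M | x m ≠ x' m}.Finite → x = x'

/-- The cell space `R` is right amenable: there is a finitely additive probability
measure on the power set of `M` that is semi-invariant under the right semi-action. -/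
def RightAmenable (R : CellSpace G M) : Prop :=
  ∃ μ : Set M → ℝ, (∀ A : Set M, 0 ≤ μ A) ∧ μ Set.univ = 1 ∧
    (∀ A B : Set M, Disjoint A B → μ (A ∪ B) = μ A + μ B) ∧
    ∀ (g : G) (A : Set M), Set.InjOn (fun m => R.sAct m g) A →
      μ ((fun m => R.sAct m g) '' A) = μ A

/-- `F` is a right Følner net in `R` (indexed by the directed set `I`). -/
def IsFolnerNet (R : CellSpace G M) (S : Set G) {I : Type*} [Preorder I]
    (F : I → Set M) : Prop :=
  (∀ i, (F i).Nonempty) ∧ (∀ i, (F i).Finite) ∧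
  ∀ ρ : ℕ, Tendsto (fun i => ((R.bdry S (F i) ρ).ncard : ℝ) / ((F i).ncard : ℝ))
    atTop (nhds 0)

/-- The entropy of `X ⊆ Q^M` with respect to the net `F`:
`limsup_i log|X_{F_i}| / |F_i|`. -/
noncomputable def entropy (R : CellSpace G M) (S : Set G) {I : Type*} [Preorder I]
    (F : I → Set M) (X : Set (M → Q)) : ℝ :=
  limsup (fun i => Real.log ((restr (F i) X).ncard : ℝ) / ((F i).ncard : ℝ)) atTop

/-- `T` is a `⟨θ, κ, θ'⟩`-tiling of `R`. -/
def IsTiling (R : CellSpace G M) (S : Set G) (θ κ θ' : ℕ) (T : Set M) : Prop :=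
  (∀ t ∈ T, ∀ t' ∈ T, t ≠ t' →
    ∀ a ∈ R.ball S t θ, ∀ b ∈ R.ball S t' θ, κ + 1 ≤ R.dist S a b) ∧
  ∀ m : M, ∃ t ∈ T, m ∈ R.ball S t θ'

/-- The action `h ⊛ c` of `h ∈ G` on configurations: `(h ⊛ c)(m) = c(h⁻¹ ▷ m)`. -/
def shiftAct (R : CellSpace G M) (h : G) (c : M → Q) : M → Q :=
  fun m => c (R.act h⁻¹ m)

namespace CellSpace

variable {R : CellSpace G M} {S : Set G}

lemma act_inv_act (g : G) (m : M) : R.act g⁻¹ (R.act g m) = m := by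
  rw [← R.mul_act, inv_mul_cancel, R.one_act]

lemma coord_inv_act (m : M) : R.act (R.coord m)⁻¹ m = R.m0 := by
  have h := act_inv_act (R := R) (R.coord m) R.m0
  rwa [R.coord_act] at h

lemma nAct_eq (m n : M) : R.nAct m n = R.act (R.coord m) n := by
  rw [nAct, R.mul_act, R.coord_act]

lemma chain_zero {m m' : M} : R.Chain S m m' 0 ↔ m = m' := by
  constructor
  · rintro ⟨f, rfl, rfl, -⟩
    rfl
  · rintro rfl
    exact ⟨fun _ => m, rfl, rfl, fun i hi => absurd hi (Nat.not_lt_zero i)⟩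

lemma chain_succ {m m'' : M} {n : ℕ} :
    R.Chain S m m'' (n + 1) ↔ ∃ m', R.Chain S m m' n ∧ ∃ s ∈ S, m'' = R.sAct m' s := by
  constructor
  · rintro ⟨f, h0, hn, hf⟩
    exact ⟨f n, ⟨f, h0, rfl, fun i hi => hf i (by omega)⟩, hn ▸ hf n (by omega)⟩
  · rintro ⟨m', ⟨f, h0, hn, hf⟩, hstep⟩
    refine ⟨fun j => if j ≤ n then f j else m'', by simpa using h0, by simp, fun i hi => ?_⟩
    rcases Nat.lt_or_eq_of_le (Nat.lt_succ_iff.mp hi) with hi | rfl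
    · simpa [hi.le, Nat.succ_le_of_lt hi] using hf i hi
    · simpa [hn] using hstep

lemma Chain.trans {m m' m'' : M} {n k : ℕ} (h₁ : R.Chain S m m' n)
    (h₂ : R.Chain S m' m'' k) : R.Chain S m m'' (n + k) := by
  induction k generalizing m'' with
  | zero => rwa [chain_zero.1 h₂] at h₁
  | succ k ih =>
    obtain ⟨u, hu, hstep⟩ := chain_succ.1 h₂
    exact chain_succ.2 ⟨u, ih hu, hstep⟩

lemma dist_le_of_chain {m m' : M} {n : ℕ} (h : R.Chain S m m' n) : R.dist S m m' ≤ n :=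
  Nat.sInf_le h

lemma dist_self (m : M) : R.dist S m m = 0 :=
  Nat.le_zero.mp (dist_le_of_chain (chain_zero.2 rfl))

lemma subset_clos (A : Set M) (ρ : ℕ) : A ⊆ R.clos S A ρ :=
  fun m hm => ⟨m, by simp [ball, dist_self], hm⟩

section GeneratingSet

variable (hS : R.IsRightGenSet S)
include hS

/-- Stepping by `s` from `u` and back: `g_{m₀,v}⁻¹ g_{m₀,u} s ∈ G₀` for `v = u ↝ s`, so
`g_{m₀,v}⁻¹ g_{m₀,u} s · s⁻¹ ∈ G₀ · S ⊆ S` leads from `v` back to `u`. -/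
lemma exists_sAct_eq_sAct_sAct {u : M} {s : G} (hs : s ∈ S) :
    ∃ s' ∈ S, u = R.sAct (R.sAct u s) s' := by
  set v := R.sAct u s
  have hstab : R.stab ((R.coord v)⁻¹ * (R.coord u * s)) := by
    rw [stab, R.mul_act]
    exact coord_inv_act v
  refine ⟨(R.coord v)⁻¹ * (R.coord u * s) * s⁻¹, hS.stab_mul _ hstab _ (hS.symm s hs), ?_⟩
  rw [sAct, show R.coord v * ((R.coord v)⁻¹ * (R.coord u * s) * s⁻¹) = R.coord u by group,
    R.coord_act]

lemma exists_act_sAct_eq (g : G) {u : M} {s : G} (hs : s ∈ S) :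
    ∃ s' ∈ S, R.act g (R.sAct u s) = R.sAct (R.act g u) s' := by
  set v := R.act g u
  have hstab : R.stab ((R.coord v)⁻¹ * (g * R.coord u)) := by
    rw [stab, R.mul_act, R.mul_act, R.coord_act]
    exact coord_inv_act v
  refine ⟨(R.coord v)⁻¹ * (g * R.coord u) * s, hS.stab_mul _ hstab s hs, ?_⟩
  rw [sAct, sAct, show R.coord v * ((R.coord v)⁻¹ * (g * R.coord u) * s)
    = g * (R.coord u * s) by group, R.mul_act g]

lemma Chain.symm {m m' : M} {n : ℕ} (h : R.Chain S m m' n) : R.Chain S m' m n := by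
  induction n generalizing m' with
  | zero => exact chain_zero.2 (chain_zero.1 h).symm
  | succ n ih =>
    obtain ⟨u, hu, s, hs, rfl⟩ := chain_succ.1 h
    obtain ⟨s', hs', hback⟩ := exists_sAct_eq_sAct_sAct hS hs
    have hstep : R.Chain S (R.sAct u s) u 1 :=
      chain_succ.2 ⟨_, chain_zero.2 rfl, s', hs', hback⟩
    simpa [add_comm] using hstep.trans (ih hu)

lemma Chain.act (g : G) {m m' : M} {n : ℕ} (h : R.Chain S m m' n) :
    R.Chain S (R.act g m) (R.act g m') n := by
  induction n generalizing m' with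
  | zero => exact chain_zero.2 (by rw [chain_zero.1 h])
  | succ n ih =>
    obtain ⟨u, hu, s, hs, rfl⟩ := chain_succ.1 h
    exact chain_succ.2 ⟨_, ih hu, exists_act_sAct_eq hS g hs⟩

lemma exists_chain (m m' : M) : ∃ n, R.Chain S m m' n := by
  obtain ⟨k, f, h0, hk, hf⟩ := hS.generates m
  obtain ⟨k', f', h0', hk', hf'⟩ := hS.generates m'
  exact ⟨k + k', (Chain.symm hS ⟨f, h0, hk, hf⟩).trans ⟨f', h0', hk', hf'⟩⟩

lemma chain_dist (m m' : M) : R.Chain S m m' (R.dist S m m') :=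
  Nat.sInf_mem (exists_chain hS m m')

lemma eq_of_dist_eq_zero {m m' : M} (h : R.dist S m m' = 0) : m = m' :=
  chain_zero.1 (h ▸ chain_dist hS m m')

lemma dist_comm (m m' : M) : R.dist S m m' = R.dist S m' m :=
  le_antisymm (dist_le_of_chain (Chain.symm hS (chain_dist hS m' m)))
    (dist_le_of_chain (Chain.symm hS (chain_dist hS m m')))

lemma dist_triangle (m m' m'' : M) : R.dist S m m'' ≤ R.dist S m m' + R.dist S m' m'' :=
  dist_le_of_chain ((chain_dist hS m m').trans (chain_dist hS m' m''))

lemma dist_act_le (g : G) (m m' : M) :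
    R.dist S (R.act g m) (R.act g m') ≤ R.dist S m m' :=
  dist_le_of_chain (Chain.act hS g (chain_dist hS m m'))

lemma dist_nAct_le (m n : M) : R.dist S m (R.nAct m n) ≤ R.dist S R.m0 n := by
  simpa [nAct_eq, R.coord_act] using dist_act_le hS (R.coord m) R.m0 n

lemma ball_finite (m : M) (ρ : ℕ) : (R.ball S m ρ).Finite := by
  induction ρ with
  | zero =>
    refine (Set.finite_singleton m).subset fun m' hm' => ?_
    exact (eq_of_dist_eq_zero hS (Nat.le_zero.mp hm')).symm
  | succ ρ ih =>
    refine (ih.union (hS.finite.biUnion fun s _ => ih.image (R.sAct · s))).subset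
      fun m' hm' => ?_
    rcases Nat.lt_or_ge (R.dist S m m') (ρ + 1) with hlt | hge
    · exact Or.inl (Nat.lt_succ_iff.mp hlt)
    · obtain ⟨u, hu, s, hs, rfl⟩ := chain_succ.1 (le_antisymm hm' hge ▸ chain_dist hS m m')
      exact Or.inr (Set.mem_biUnion hs ⟨u, dist_le_of_chain hu, rfl⟩)

lemma clos_finite {A : Set M} (hA : A.Finite) (ρ : ℕ) : (R.clos S A ρ).Finite := by
  refine (hA.biUnion fun a _ => ball_finite hS a ρ).subset ?_
  rintro m ⟨a, ha, haA⟩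
  exact Set.mem_biUnion haA (show R.dist S a m ≤ ρ by rwa [dist_comm hS])

lemma notMem_clos_of_dist_le {A : Set M} {κ ρ : ℕ} {m m' : M} (hm : m ∉ R.clos S A (κ + ρ))
    (hmm' : R.dist S m m' ≤ κ) : m' ∉ R.clos S A ρ := by
  rintro ⟨a, ha, haA⟩
  exact hm ⟨a, (dist_triangle hS m m' a).trans (Nat.add_le_add hmm' ha), haA⟩

end GeneratingSet

end CellSpace

section Subshift

open CellSpace

variable {R : CellSpace G M} {S : Set G} {H : Subgroup G}

lemma exists_dist_le_of_blocks {𝔉 : Set (Σ A : Set M, A → Q)} (h𝔉 : 𝔉.Finite)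
    (hdom : ∀ f ∈ 𝔉, f.1.Finite) :
    ∃ r : ℕ, ∀ f ∈ 𝔉, ∀ a ∈ f.1, ∀ b ∈ f.1, R.dist S a b ≤ r := by
  have hfin : (⋃ f ∈ 𝔉, (fun p : M × M => R.dist S p.1 p.2) '' (f.1 ×ˢ f.1)).Finite :=
    h𝔉.biUnion fun f hf => ((hdom f hf).prod (hdom f hf)).image _
  obtain ⟨r, hr⟩ := hfin.bddAbove
  exact ⟨r, fun f hf a ha b hb => hr (Set.mem_biUnion hf ⟨(a, b), ⟨ha, hb⟩, rfl⟩)⟩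

/-- A translate of a forbidden block that meets `A` lies in `A^{+r}`, where the glued
configuration coincides with `x`; one that misses `A` sees only `y`. -/
lemma piecewise_mem_generated (hS : R.IsRightGenSet S) {𝔉 : Set (Σ A : Set M, A → Q)}
    {r : ℕ} (hr : ∀ f ∈ 𝔉, ∀ a ∈ f.1, ∀ b ∈ f.1, R.dist S a b ≤ r)
    {x y : M → Q} (hx : x ∈ Generated R H 𝔉) (hy : y ∈ Generated R H 𝔉) (A : Set M)
    [DecidablePred (· ∈ A)] (hxy : EqOn x y (R.extB S A r)) :
    A.piecewise x y ∈ Generated R H 𝔉 := by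
  rintro f hf ⟨h, hH, hocc⟩
  by_cases hmeet : ∃ a : f.1, R.act h a ∈ A
  · obtain ⟨a₀, ha₀⟩ := hmeet
    refine hx f hf ⟨h, hH, fun a => ?_⟩
    rw [← hocc a]
    by_cases ha : R.act h a ∈ A
    · rw [piecewise_eq_of_mem _ _ _ ha]
    · rw [piecewise_eq_of_notMem _ _ _ ha]
      exact hxy ⟨⟨_, (dist_act_le hS h _ _).trans (hr f hf _ a.2 _ a₀.2), ha₀⟩, ha⟩
  · simp only [not_exists] at hmeet
    exact hy f hf ⟨h, hH, fun a => by rw [← hocc a, piecewise_eq_of_notMem _ _ _ (hmeet a)]⟩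

lemma allowed_domRestrict {X : Set (M → Q)} {x : M → Q} (hx : x ∈ X) (B : Set M) :
    Allowed R H X (B.domRestrict x) :=
  ⟨x, hx, 1, H.one_mem, fun a => by rw [R.one_act]; rfl⟩

lemma exists_mem_eqOn_eqOn_compl (hS : R.IsRightGenSet S) {X : Set (M → Q)}
    (hX : IsSubshiftFT R H X) {κ : ℕ} (hsi : IsStronglyIrr R S H X κ) {x y : M → Q}
    (hx : x ∈ X) (hy : y ∈ X) {F : Set M} (hF : F.Finite) :
    ∃ z ∈ X, EqOn z x F ∧ EqOn z y (R.clos S F κ)ᶜ := by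
  classical
  obtain ⟨𝔉, h𝔉, hdom, rfl⟩ := hX
  obtain ⟨r, hr⟩ := exists_dist_le_of_blocks (R := R) (S := S) h𝔉 hdom
  -- `x` on `F` and `y` on the `r`-collar `W` of `F^{+κ}` are realised together, and the
  -- result is continued by `y` across `W`.
  set A := R.clos S F κ
  set W := R.extB S A r
  have hW : W.Finite := (clos_finite hS (clos_finite hS hF κ) r).subset sdiff_subset
  have hsep : ∀ a ∈ F, ∀ b ∈ W, κ + 1 ≤ R.dist S a b := by
    intro a ha b hb
    by_contra! hlt
    exact hb.2 ⟨a, show R.dist S b a ≤ κ by rw [dist_comm hS]; omega, ha⟩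
  obtain ⟨x₁, hx₁, hx₁F, hx₁W⟩ :=
    hsi F W hF hW _ _ (allowed_domRestrict hx F) (allowed_domRestrict hy W) hsep
  refine ⟨A.piecewise x₁ y, piecewise_mem_generated hS hr hx₁ hy A
    fun m hm => congrFun hx₁W ⟨m, hm⟩, fun m hm => ?_,
    fun m hm => piecewise_eq_of_notMem _ _ _ hm⟩
  rw [piecewise_eq_of_mem _ _ _ (subset_clos F κ hm)]
  exact congrFun hx₁F ⟨m, hm⟩

end Subshift

section LocalMap

open CellSpace

variable {R : CellSpace G M} {S : Set G} {H : Subgroup G} {X Y : Set (M → Q)}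
  {Δ : (M → Q) → (M → Q)} {κ : ℕ}

lemma IsLocalMap.apply_eq_of_eqOn_ball (hS : R.IsRightGenSet S)
    (hΔ : IsLocalMap R S H X Y Δ κ) {x x' : M → Q} (hx : x ∈ X) (hx' : x' ∈ X) {m : M}
    (hxx' : EqOn x x' (R.ball S m κ)) : Δ x m = Δ x' m := by
  obtain ⟨-, N, hN, -, δ, -, hδ⟩ := hΔ
  rw [hδ x hx, hδ x' hx']
  congr 1
  funext n
  exact hxx' ((dist_nAct_le hS m n).trans (hN n.2))

lemma injOn_domRestrict_clos_of_preInjective (hS : R.IsRightGenSet S)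
    (hΔ : IsLocalMap R S H X Y Δ κ) (hPI : PreInjective X Δ) {F : Set M} (hF : F.Finite)
    (ρ : ℕ) (y : M → Q) :
    InjOn (fun x => (R.clos S F (κ + ρ)).domRestrict (Δ x))
      {x ∈ X | EqOn x y (R.clos S F ρ)ᶜ} := by
  rintro x ⟨hx, hxy⟩ x' ⟨hx', hx'y⟩ heq
  have hΔ_eq : Δ x = Δ x' := funext fun m => by
    by_cases hm : m ∈ R.clos S F (κ + ρ)
    · exact congrFun heq ⟨m, hm⟩
    · refine hΔ.apply_eq_of_eqOn_ball hS hx hx' fun m' hm' => ?_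
      have hfar := notMem_clos_of_dist_le hS hm hm'
      rw [hxy hfar, hx'y hfar]
  refine hPI x hx x' hx' hΔ_eq ((clos_finite hS hF ρ).subset fun m hm => ?_)
  by_contra hfar
  exact hm (by rw [hxy hfar, hx'y hfar])

end LocalMap

lemma log_natCast_le_add_mul_log {n m q k : ℕ} (h : n ≤ m * q ^ k) :
    Real.log n ≤ Real.log m + k * Real.log q := by
  rcases Nat.eq_zero_or_pos n with rfl | hn
  · simp only [Nat.cast_zero, Real.log_zero]
    exact add_nonneg (Real.log_natCast_nonneg m)
      (mul_nonneg k.cast_nonneg (Real.log_natCast_nonneg q))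
  obtain ⟨hm, hq⟩ : 0 < m ∧ 0 < q ^ k := CanonicallyOrderedAdd.mul_pos.mp (hn.trans_le h)
  calc Real.log n ≤ Real.log ((m * q ^ k : ℕ) : ℝ) :=
        Real.log_le_log (by exact_mod_cast hn) (by exact_mod_cast h)
    _ = Real.log m + k * Real.log q := by
        push_cast
        rw [Real.log_mul (by positivity) (by exact_mod_cast hq.ne'), Real.log_pow]

lemma limsup_le_limsup_of_le_add_of_tendsto_zero {ι : Type*} {l : Filter ι} [l.NeBot]
    {a b c : ι → ℝ} (h : ∀ᶠ i in l, a i ≤ b i + c i) (hc : Tendsto c l (nhds 0))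
    (ha : IsBoundedUnder (· ≥ ·) l a) (hb_le : IsBoundedUnder (· ≤ ·) l b)
    (hb_ge : IsBoundedUnder (· ≥ ·) l b) :
    limsup a l ≤ limsup b l :=
  calc limsup a l ≤ limsup (b + c) l :=
        limsup_le_limsup h ha.isCoboundedUnder_le
          (isBoundedUnder_le_add hb_le hc.isBoundedUnder_le)
    _ ≤ limsup b l + limsup c l :=
        limsup_add_le hb_ge hb_le hc.isBoundedUnder_ge.isCoboundedUnder_le hc.isBoundedUnder_le
    _ = limsup b l := by rw [hc.limsup_eq, add_zero]

-- `entropy R S F X` unfolds to `limsup (fun i => logDensity (F i) X) atTop`.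
noncomputable def logDensity (F : Set M) (X : Set (M → Q)) : ℝ :=
  Real.log (restr F X).ncard / F.ncard

lemma logDensity_nonneg (F : Set M) (X : Set (M → Q)) : 0 ≤ logDensity F X :=
  div_nonneg (Real.log_natCast_nonneg _) (Nat.cast_nonneg _)

section Counting

open CellSpace

variable [Finite Q] {R : CellSpace G M} {S : Set G} {H : Subgroup G} {X Y : Set (M → Q)}
  {Δ : (M → Q) → (M → Q)} {κ ρ : ℕ}

lemma restr_finite {F : Set M} (hF : F.Finite) (X : Set (M → Q)) : (restr F X).Finite := by
  have := hF.to_subtype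
  exact Set.toFinite _

lemma ncard_restr_le_pow {F : Set M} (hF : F.Finite) (X : Set (M → Q)) :
    (restr F X).ncard ≤ Nat.card Q ^ F.ncard := by
  have := hF.to_subtype
  calc (restr F X).ncard ≤ (univ : Set (F → Q)).ncard := ncard_le_ncard (subset_univ _)
    _ = Nat.card Q ^ F.ncard := by rw [ncard_univ, Nat.card_fun, Nat.card_coe_set_eq]

lemma ncard_restr_le_mul_pow (X : Set (M → Q)) {F E : Set M} (hFE : F ⊆ E) (hE : E.Finite) :
    (restr E X).ncard ≤ (restr F X).ncard * Nat.card Q ^ (E \ F).ncard := by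
  have := hE.to_subtype
  have := (hE.subset (sdiff_subset (s := E) (t := F))).to_subtype
  have := (hE.subset hFE).to_subtype
  set split : (E → Q) → (F → Q) × ((E \ F : Set M) → Q) :=
    fun u => (fun a => u ⟨a, hFE a.2⟩, fun a => u ⟨a, a.2.1⟩)
  have hmaps : MapsTo split (restr E X) (restr F X ×ˢ univ) := by
    rintro _ ⟨x, hx, rfl⟩
    exact ⟨⟨x, hx, rfl⟩, trivial⟩
  have hinj : InjOn split (restr E X) := by
    intro u _ v _ huv
    funext a
    by_cases haF : (a : M) ∈ F
    · exact congrFun (congrArg Prod.fst huv) ⟨a, haF⟩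
    · exact congrFun (congrArg Prod.snd huv) ⟨a, a.2, haF⟩
  calc (restr E X).ncard ≤ (restr F X ×ˢ (univ : Set ((E \ F : Set M) → Q))).ncard :=
        ncard_le_ncard_of_injOn split hmaps hinj (toFinite _)
    _ = (restr F X).ncard * Nat.card Q ^ (E \ F).ncard := by
        rw [ncard_prod, ncard_univ, Nat.card_fun, Nat.card_coe_set_eq]

lemma ncard_restr_le_ncard_restr_image (hS : R.IsRightGenSet S) (hX : IsSubshiftFT R H X)
    (hsi : IsStronglyIrr R S H X ρ) (hΔ : IsLocalMap R S H X Y Δ κ) (hPI : PreInjective X Δ)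
    {F : Set M} (hF : F.Finite) :
    (restr F X).ncard ≤ (restr (R.clos S F (κ + ρ)) (Δ '' X)).ncard := by
  rcases X.eq_empty_or_nonempty with rfl | ⟨y, hy⟩
  · simp [restr]
  choose! extend hextend using
    fun x (hx : x ∈ X) => exists_mem_eqOn_eqOn_compl hS hX hsi hx hy hF
  set Z := {x ∈ X | EqOn x y (R.clos S F ρ)ᶜ}
  set E := R.clos S F (κ + ρ)
  have hinj := injOn_domRestrict_clos_of_preInjective hS hΔ hPI hF ρ y
  have hmaps : MapsTo (fun x => E.domRestrict (Δ x)) Z (restr E (Δ '' X)) :=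
    fun x hx => ⟨Δ x, mem_image_of_mem Δ hx.1, rfl⟩
  have hZ : Z.Finite :=
    Finite.of_finite_image ((restr_finite (clos_finite hS hF _) _).subset hmaps.image_subset) hinj
  have hrestr : restr F X ⊆ F.domRestrict '' Z := by
    rintro _ ⟨x, hx, rfl⟩
    obtain ⟨hzX, hzx, hzy⟩ := hextend x hx
    exact ⟨extend x, ⟨hzX, hzy⟩, funext fun a => hzx a.2⟩
  calc (restr F X).ncard ≤ (F.domRestrict '' Z).ncard := ncard_le_ncard hrestr (hZ.image _)
    _ ≤ Z.ncard := ncard_image_le hZ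
    _ ≤ (restr E (Δ '' X)).ncard :=
        ncard_le_ncard_of_injOn _ hmaps hinj (restr_finite (clos_finite hS hF _) _)

lemma logDensity_le_log_card {F : Set M} (hF : F.Finite) (X : Set (M → Q)) :
    logDensity F X ≤ Real.log (Nat.card Q) := by
  have h := log_natCast_le_add_mul_log (m := 1) (by simpa using ncard_restr_le_pow hF X)
  rw [Nat.cast_one, Real.log_one, zero_add] at h
  exact div_le_of_le_mul₀ (Nat.cast_nonneg _) (Real.log_natCast_nonneg _) (by linarith)

lemma logDensity_le_logDensity_image_add (hS : R.IsRightGenSet S) (hX : IsSubshiftFT R H X)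
    (hsi : IsStronglyIrr R S H X ρ) (hΔ : IsLocalMap R S H X Y Δ κ) (hPI : PreInjective X Δ)
    {F : Set M} (hF : F.Finite) :
    logDensity F X ≤ logDensity F (Δ '' X) +
      (R.bdry S F (κ + ρ)).ncard / F.ncard * Real.log (Nat.card Q) := by
  set E := R.clos S F (κ + ρ)
  have hE : E.Finite := clos_finite hS hF _
  have hcount := (ncard_restr_le_ncard_restr_image hS hX hsi hΔ hPI hF).trans
    (ncard_restr_le_mul_pow (Δ '' X) (subset_clos F _) hE)
  have hbdry : ((E \ F).ncard : ℝ) ≤ (R.bdry S F (κ + ρ)).ncard := by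
    refine mod_cast ncard_le_ncard (fun m hm => ?_) (hE.subset sdiff_subset)
    exact (⟨hm.1, fun hint => hm.2 hint.1⟩ : m ∈ E \ R.inter S F (κ + ρ))
  have hlog : Real.log (restr F X).ncard ≤ Real.log (restr F (Δ '' X)).ncard +
      (R.bdry S F (κ + ρ)).ncard * Real.log (Nat.card Q) :=
    calc _ ≤ _ := log_natCast_le_add_mul_log hcount
      _ ≤ _ := by gcongr
  rw [logDensity, logDensity, div_mul_eq_mul_div, ← add_div]
  exact div_le_div_of_nonneg_right hlog (Nat.cast_nonneg _)

end Counting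

theorem stmt15_general {I : Type*} [Nonempty I] [SemilatticeSup I]
    [Finite Q] (R : CellSpace G M) (S : Set G) (hS : R.IsRightGenSet S)
    (H : Subgroup G) (F : I → Set M) (hF : IsFolnerNet R S F)
    (X : Set (M → Q)) (hX : IsSubshiftFT R H X)
    (hXsi : ∃ κ : ℕ, IsStronglyIrr R S H X κ)
    (Y : Set (M → Q))
    (Δ : (M → Q) → (M → Q)) (hΔ : ∃ κ : ℕ, IsLocalMap R S H X Y Δ κ)
    (hent : entropy R S F (Δ '' X) < entropy R S F X) :
    ¬ PreInjective X Δ := by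
  intro hPI
  obtain ⟨ρ, hsi⟩ := hXsi
  obtain ⟨κ, hΔ⟩ := hΔ
  obtain ⟨-, hFfin, hbdry⟩ := hF
  have hsmall : Tendsto (fun i => ((R.bdry S (F i) (κ + ρ)).ncard : ℝ) / (F i).ncard *
      Real.log (Nat.card Q)) atTop (nhds 0) := by
    simpa using (hbdry (κ + ρ)).mul_const (Real.log (Nat.card Q))
  have hle : entropy R S F X ≤ entropy R S F (Δ '' X) :=
    limsup_le_limsup_of_le_add_of_tendsto_zero
      (Eventually.of_forall fun i => logDensity_le_logDensity_image_add hS hX hsi hΔ hPI (hFfin i))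
      hsmall (isBoundedUnder_of ⟨0, fun i => logDensity_nonneg (F i) X⟩)
      (isBoundedUnder_of ⟨_, fun i => logDensity_le_log_card (hFfin i) (Δ '' X)⟩)
      (isBoundedUnder_of ⟨0, fun i => logDensity_nonneg (F i) (Δ '' X)⟩)
  exact hle.not_gt hent

theorem stmt15 {I : Type*} [Nonempty I] [SemilatticeSup I]
    [Finite Q] (R : CellSpace G M) (S : Set G) (hS : R.IsRightGenSet S)
    (H : Subgroup G) (hH : ∀ m : M, R.coord m ∈ H)
    (hAm : RightAmenable R) (F : I → Set M) (hF : IsFolnerNet R S F)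
    (X : Set (M → Q)) (hX : IsSubshiftFT R H X)
    (hXsi : ∃ κ : ℕ, IsStronglyIrr R S H X κ)
    (Y : Set (M → Q)) (hY : IsSubshift R H Y)
    (Δ : (M → Q) → (M → Q)) (hΔ : ∃ κ : ℕ, IsLocalMap R S H X Y Δ κ)
    (hent : entropy R S F (Δ '' X) < entropy R S F X) :
    ¬ PreInjective X Δ :=
  stmt15_general R S hS H F hF X hX hXsi Y Δ hΔ hent

end GoE
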